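/- Combination rule for type consistency: let u, v be words over Σ_k with μ_a(u) = μ_u(u) and μ_a(v) = μ_u(v). Write μ_u(u) = c_u·o_u and μ_u(v) = c_v·o_v, where c_u, c_v consist only of closing parentheses and o_u, o_v only of opening parentheses, and let t = min(|o_u|, |c_v|). Then μ_a(uv) = μ_u(uv) if and only if for every i with 1 ≤ i ≤ t, the type of the (|o_u| − i + 1)-th symbol of o_u equals the type of the i-th symbol of c_v. -/

import Mathlib

/-- The alphabet `Σ_k` of `k` types of opening (`op`) and closing (`cl`) parentheses. -/
inductive Par (k : ℕ) where
  | op : Fin k → Par k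
  | cl : Fin k → Par k
deriving DecidableEq

namespace Par

/-- One step of the type-unaware reduction: `μ_u(zσ)` computed from `μ_u(z)`. -/
def muUStep {k : ℕ} (z : List (Par k)) (σ : Par k) : List (Par k) :=
  match z.getLast?, σ with
  | some (op _), cl _ => z.dropLast
  | _, _ => z ++ [σ]

/-- The type-unaware reduction `μ_u`. -/
def muU {k : ℕ} (w : List (Par k)) : List (Par k) := w.foldl muUStep []

/-- One step of the type-aware reduction: cancellation requires matching types. -/
def muAStep {k : ℕ} (z : List (Par k)) (σ : Par k) : List (Par k) :=
  match z.getLast?, σ with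
  | some (op i), cl j => if i = j then z.dropLast else z ++ [σ]
  | _, _ => z ++ [σ]

/-- The type-aware reduction `μ_a`. -/
def muA {k : ℕ} (w : List (Par k)) : List (Par k) := w.foldl muAStep []

/-- Is the symbol a closing parenthesis? -/
def isCl {k : ℕ} : Par k → Bool
  | cl _ => true
  | _ => false

/-- Is the symbol an opening parenthesis? -/
def isOp {k : ℕ} : Par k → Bool
  | op _ => true
  | _ => false

/-- `ℓ(w)`: the number of unmatched closing parentheses of `w`. -/
def ell {k : ℕ} (w : List (Par k)) : ℕ := (muU w).countP isCl

/-- `r(w)`: the number of unmatched opening parentheses of `w`. -/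
def rr {k : ℕ} (w : List (Par k)) : ℕ := (muU w).countP isOp

/-- The Dyck language `D_k`: smallest set containing `ε`, closed under
concatenation, and containing `⟨_i w ⟩_i` whenever it contains `w`. -/
inductive Dyck {k : ℕ} : List (Par k) → Prop where
  | nil : Dyck []
  | append {u v : List (Par k)} : Dyck u → Dyck v → Dyck (u ++ v)
  | wrap {w : List (Par k)} (i : Fin k) : Dyck w → Dyck (op i :: w ++ [cl i])

end Par

/-!
Both reductions are folds of one stack machine, which cancels `⟨_i ⟩_j` exactly when
`R i j` (always for `μ_u`, when `i = j` for `μ_a`). Folding is compatible with reduction,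
so `μ(uv)` is obtained by running the closing block `c_v` against the stack `c_u o_u`.
Type-unaware, `c_v` and `o_u` annihilate each other along `t` positions. Type-aware, the
machine does the same as long as the types of the reversed `o_u` and of `c_v` agree; at the
first disagreement it gets stuck and its output is strictly longer. So the two results
coincide iff the reversed `o_u` and `c_v` agree on their first `t` entries, i.e. one of
them is a prefix of the other.
-/

theorem List.prefix_or_prefix_iff_getElem? {α : Type*} (l₁ l₂ : List α) :
    (l₁ <+: l₂ ∨ l₂ <+: l₁) ↔ ∀ m < min l₁.length l₂.length, l₁[m]? = l₂[m]? := by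
  induction l₁ generalizing l₂ with
  | nil => simp
  | cons a l₁ ih =>
    cases l₂ with
    | nil => simp
    | cons b l₂ =>
      simp only [List.cons_prefix_cons, List.length_cons, Nat.add_min_add_right,
        Nat.forall_lt_succ_left, List.getElem?_cons_zero, Option.some.injEq,
        List.getElem?_cons_succ, ← ih, eq_comm (a := b)]
      tauto

namespace Par

variable {k : ℕ} (R : Fin k → Fin k → Prop) [DecidableRel R]

def cancelStep (z : List (Par k)) (σ : Par k) : List (Par k) :=
  match z.getLast?, σ with
  | some (op i), cl j => if R i j then z.dropLast else z ++ [σ]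
  | _, _ => z ++ [σ]

def reduce (w : List (Par k)) : List (Par k) := w.foldl (cancelStep R) []

theorem muUStep_eq_cancelStep : muUStep = cancelStep (k := k) (fun _ _ => True) := by
  funext z σ
  unfold muUStep cancelStep
  split <;> simp

theorem muU_eq_reduce : muU = reduce (k := k) (fun _ _ => True) := by
  funext w
  rw [muU, reduce, muUStep_eq_cancelStep]

theorem muA_eq_reduce : muA = reduce (k := k) (· = ·) := rfl

variable {R}

theorem cancelStep_nil (σ : Par k) : cancelStep R [] σ = [σ] := by
  cases σ <;> rfl

theorem cancelStep_op (z : List (Par k)) (i : Fin k) :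
    cancelStep R z (op i) = z ++ [op i] := by
  unfold cancelStep
  split <;> simp_all

theorem cancelStep_append_op_cl (z : List (Par k)) (i j : Fin k) :
    cancelStep R (z ++ [op i]) (cl j) = if R i j then z else z ++ [op i, cl j] := by
  simp [cancelStep]

theorem cancelStep_append_cl (z : List (Par k)) (i : Fin k) (σ : Par k) :
    cancelStep R (z ++ [cl i]) σ = z ++ [cl i, σ] := by
  simp [cancelStep]

theorem foldl_cancelStep_cancelStep (z r : List (Par k)) (σ : Par k) :
    (cancelStep R r σ).foldl (cancelStep R) z = cancelStep R (r.foldl (cancelStep R) z) σ := by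
  rcases List.eq_nil_or_concat r with rfl | ⟨r, τ, rfl⟩
  · simp [cancelStep_nil]
  rcases τ with i | i
  · rcases σ with j | j
    · simp [cancelStep_op]
    · by_cases h : R i j <;> simp [cancelStep_op, cancelStep_append_op_cl, h]
  · simp [cancelStep_append_cl]

theorem foldl_reduce (z w : List (Par k)) :
    (reduce R w).foldl (cancelStep R) z = w.foldl (cancelStep R) z := by
  induction w using List.reverseRecOn with
  | nil => rfl
  | append_singleton w σ ih =>
    simp only [reduce, List.foldl_append, List.foldl_cons, List.foldl_nil] at ih ⊢
    rw [foldl_cancelStep_cancelStep, ih]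

theorem reduce_append (u v : List (Par k)) :
    reduce R (u ++ v) = (reduce R v).foldl (cancelStep R) (reduce R u) := by
  rw [foldl_reduce, reduce, reduce, List.foldl_append]

theorem foldl_cancelStep_map_op (z : List (Par k)) (o : List (Fin k)) :
    (o.map op).foldl (cancelStep R) z = z ++ o.map op := by
  induction o generalizing z with
  | nil => simp
  | cons i o ih => simp [cancelStep_op, ih]

theorem foldl_cancelStep_map_cl_map_cl (c d : List (Fin k)) :
    (d.map cl).foldl (cancelStep R) (c.map cl) = (c ++ d).map cl := by
  induction d generalizing c with
  | nil => simp
  | cons j d ih =>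
    rcases List.eq_nil_or_concat c with rfl | ⟨c, i, rfl⟩
    · simpa [cancelStep_nil] using ih [j]
    · simpa [cancelStep_append_cl] using ih (c ++ [i, j])

theorem foldl_cancelStep_map_cl_of_append_cl (z : List (Par k)) (j : Fin k) (d : List (Fin k)) :
    (d.map cl).foldl (cancelStep R) (z ++ [cl j]) = z ++ (j :: d).map cl := by
  induction d generalizing z j with
  | nil => simp
  | cons j' d ih => simpa [cancelStep_append_cl] using ih (z ++ [cl j]) j'

theorem foldl_cancelStep_map_cl_cons (c o d : List (Fin k)) (i j : Fin k) :
    ((j :: d).map cl).foldl (cancelStep R) (c.map cl ++ (o ++ [i]).map op) =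
      if R i j then (d.map cl).foldl (cancelStep R) (c.map cl ++ o.map op)
      else c.map cl ++ (o ++ [i]).map op ++ (j :: d).map cl := by
  rw [List.map_cons, List.foldl_cons, List.map_append, List.map_singleton, ← List.append_assoc,
    cancelStep_append_op_cl]
  split
  · rfl
  · rw [← List.singleton_append (l := [cl j]), ← List.append_assoc,
      foldl_cancelStep_map_cl_of_append_cl, List.map_cons]

theorem reduce_append_of_eq (u v : List (Par k)) (cu ou cv ov : List (Fin k))
    (hu : reduce R u = cu.map cl ++ ou.map op) (hv : reduce R v = cv.map cl ++ ov.map op) :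
    reduce R (u ++ v) = (cv.map cl).foldl (cancelStep R) (cu.map cl ++ ou.map op) ++ ov.map op := by
  rw [reduce_append, hu, hv, List.foldl_append, foldl_cancelStep_map_op]

def cancelBlocks (c o d : List (Fin k)) : List (Par k) :=
  (c ++ d.drop o.length).map cl ++ (o.take (o.length - d.length)).map op

theorem cancelBlocks_nil_right (c o : List (Fin k)) :
    cancelBlocks c o [] = c.map cl ++ o.map op := by
  simp [cancelBlocks]

theorem cancelBlocks_nil_middle (c d : List (Fin k)) :
    cancelBlocks c [] d = (c ++ d).map cl := by
  simp [cancelBlocks]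

theorem cancelBlocks_append_singleton_cons (c o d : List (Fin k)) (i j : Fin k) :
    cancelBlocks c (o ++ [i]) (j :: d) = cancelBlocks c o d := by
  simp [cancelBlocks]

theorem foldl_cancelStep_map_cl_of_forall (hR : ∀ i j, R i j) (c o d : List (Fin k)) :
    (d.map cl).foldl (cancelStep R) (c.map cl ++ o.map op) = cancelBlocks c o d := by
  induction d generalizing o with
  | nil => simp [cancelBlocks_nil_right]
  | cons j d ih =>
    rcases List.eq_nil_or_concat o with rfl | ⟨o, i, rfl⟩
    · rw [List.map_nil, List.append_nil, foldl_cancelStep_map_cl_map_cl, cancelBlocks_nil_middle]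
    · rw [List.concat_eq_append, foldl_cancelStep_map_cl_cons, if_pos (hR i j), ih,
        cancelBlocks_append_singleton_cons]

theorem foldl_cancelStep_eq_map_cl_eq_cancelBlocks_iff (c o d : List (Fin k)) :
    (d.map cl).foldl (cancelStep (· = ·)) (c.map cl ++ o.map op) = cancelBlocks c o d ↔
      o.reverse <+: d ∨ d <+: o.reverse := by
  induction d generalizing o with
  | nil => simp [cancelBlocks_nil_right]
  | cons j d ih =>
    rcases List.eq_nil_or_concat o with rfl | ⟨o, i, rfl⟩
    · rw [List.map_nil, List.append_nil, foldl_cancelStep_map_cl_map_cl, cancelBlocks_nil_middle]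
      simp
    rw [List.concat_eq_append, foldl_cancelStep_map_cl_cons, List.reverse_append,
      List.reverse_singleton, List.singleton_append, List.cons_prefix_cons,
      List.cons_prefix_cons]
    by_cases hij : i = j
    · simp [hij, ih, cancelBlocks_append_singleton_cons]
    · simp only [hij, Ne.symm hij, if_false, false_and, or_self, iff_false]
      intro h
      have := congrArg List.length h
      simp [cancelBlocks] at this
      omega

end Par

/-- combination rule for type consistency. If `μ_a(u) = μ_u(u)` and
`μ_a(v) = μ_u(v)`, with `μ_u(u) = c_u·o_u` and `μ_u(v) = c_v·o_v` and
`t = min(|o_u|, |c_v|)`, then `μ_a(uv) = μ_u(uv)` iff for all `1 ≤ i ≤ t` the type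
of the `(|o_u| − i + 1)`-th symbol of `o_u` equals the type of the `i`-th symbol of
`c_v`. -/
theorem combination_rule {k : ℕ} (u v : List (Par k))
    (hu : Par.muA u = Par.muU u) (hv : Par.muA v = Par.muU v)
    (cu ou cv ov : List (Fin k))
    (hmu : Par.muU u = cu.map Par.cl ++ ou.map Par.op)
    (hmv : Par.muU v = cv.map Par.cl ++ ov.map Par.op) :
    Par.muA (u ++ v) = Par.muU (u ++ v) ↔
      ∀ i, 1 ≤ i → i ≤ min ou.length cv.length →
        ou[ou.length - i]? = cv[i - 1]? := by
  rw [Par.muA_eq_reduce, Par.muU_eq_reduce] at hu hv ⊢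
  rw [Par.muU_eq_reduce] at hmu hmv
  rw [Par.reduce_append_of_eq u v cu ou cv ov (hu.trans hmu) (hv.trans hmv),
    Par.reduce_append_of_eq u v cu ou cv ov hmu hmv,
    Par.foldl_cancelStep_map_cl_of_forall (fun _ _ => trivial), List.append_left_inj,
    Par.foldl_cancelStep_eq_map_cl_eq_cancelBlocks_iff, List.prefix_or_prefix_iff_getElem?,
    List.length_reverse]
  have hrev : ∀ i, 1 ≤ i → i ≤ ou.length → ou.reverse[i - 1]? = ou[ou.length - i]? :=
    fun i h₁ h₂ => List.getElem?_reverse' (by omega)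
  constructor
  · intro h i h₁ h₂
    rw [← hrev i h₁ (by omega)]
    exact h (i - 1) (by omega)
  · intro h m hm
    rw [← Nat.add_sub_cancel m 1, hrev (m + 1) (by omega) (by omega)]
    exact h (m + 1) (by omega) (by omega)
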